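/- Define birational maps on tuples (a₀, a₁, a₂; t; q, p) of real numbers by: w₁(a₀,a₁,a₂;t;q,p) = (a₀+a₁, −a₁, a₂+a₁; t; q, p − a₁/q) and w₂(a₀,a₁,a₂;t;q,p) = (a₀+a₂, a₁+a₂, −a₂; t; q + a₂/p, p). Then for all real a₀, a₁, a₂, t, q, p with q ≠ 0, p ≠ 0, qp − a₁ ≠ 0 and qp + a₂ ≠ 0, both compositions w₁ ∘ w₂ ∘ w₁ and w₂ ∘ w₁ ∘ w₂ are defined at (a₀, a₁, a₂; t; q, p) and both equal (a₀ + 2a₁ + 2a₂, −a₂, −a₁; t; q(qp + a₂)/(qp − a₁), p(qp − a₁)/(qp + a₂)); in particular the braid relation w₁w₂w₁ = w₂w₁w₂ holds. -/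

import Mathlib

/-!
Writing `f = q p`, the map `w₁` keeps `q` and shifts `f` by `-a₁`, while `w₂` keeps `p` and
shifts `f` by `+a₂`. Along `w₁w₂w₁` the product runs through `qp, qp - a₁, qp + a₂, qp`, and along
`w₂w₁w₂` through `qp, qp + a₂, qp - a₁, qp`; the coordinate kept fixed at each step then determines
the other one, and both routes end at the same point.
-/

/-- The birational action of w₁ on (a₀, a₁, a₂; t; q, p). -/
noncomputable def w1Map : ℝ × ℝ × ℝ × ℝ × ℝ × ℝ → ℝ × ℝ × ℝ × ℝ × ℝ × ℝ :=
  fun (a0, a1, a2, t, q, p) => (a0 + a1, -a1, a2 + a1, t, q, p - a1 / q)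

/-- The birational action of w₂ on (a₀, a₁, a₂; t; q, p). -/
noncomputable def w2Map : ℝ × ℝ × ℝ × ℝ × ℝ × ℝ → ℝ × ℝ × ℝ × ℝ × ℝ × ℝ :=
  fun (a0, a1, a2, t, q, p) => (a0 + a2, a1 + a2, -a2, t, q + a2 / p, p)

lemma w1Map_of_ne_zero {q : ℝ} (a0 a1 a2 t p : ℝ) (hq : q ≠ 0) :
    w1Map (a0, a1, a2, t, q, p) = (a0 + a1, -a1, a2 + a1, t, q, (q * p - a1) / q) := by
  simp only [w1Map, sub_div' hq, mul_comm]

lemma w2Map_of_ne_zero {p : ℝ} (a0 a1 a2 t q : ℝ) (hp : p ≠ 0) :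
    w2Map (a0, a1, a2, t, q, p) = (a0 + a2, a1 + a2, -a2, t, (q * p + a2) / p, p) := by
  simp only [w2Map, add_div' _ _ _ hp]

theorem w1Map_w2Map_w1Map {a0 a1 a2 t q p : ℝ}
    (hq : q ≠ 0) (h1 : q * p - a1 ≠ 0) (h2 : q * p + a2 ≠ 0) :
    w1Map (w2Map (w1Map (a0, a1, a2, t, q, p))) =
      (a0 + 2 * a1 + 2 * a2, -a2, -a1, t,
        q * (q * p + a2) / (q * p - a1), p * (q * p - a1) / (q * p + a2)) := by
  have hq₂ : (q * ((q * p - a1) / q) + (a2 + a1)) / ((q * p - a1) / q) =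
      q * (q * p + a2) / (q * p - a1) := by
    field_simp
    ring
  rw [w1Map_of_ne_zero _ _ _ _ _ hq, w2Map_of_ne_zero _ _ _ _ _ (div_ne_zero h1 hq), hq₂,
    w1Map_of_ne_zero _ _ _ _ _ (by positivity)]
  simp only [Prod.mk.injEq]
  refine ⟨by ring, by ring, by ring, trivial, trivial, ?_⟩
  field_simp
  ring

theorem w2Map_w1Map_w2Map {a0 a1 a2 t q p : ℝ}
    (hp : p ≠ 0) (h1 : q * p - a1 ≠ 0) (h2 : q * p + a2 ≠ 0) :
    w2Map (w1Map (w2Map (a0, a1, a2, t, q, p))) =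
      (a0 + 2 * a1 + 2 * a2, -a2, -a1, t,
        q * (q * p + a2) / (q * p - a1), p * (q * p - a1) / (q * p + a2)) := by
  have hp₂ : ((q * p + a2) / p * p - (a1 + a2)) / ((q * p + a2) / p) =
      p * (q * p - a1) / (q * p + a2) := by
    field_simp
    ring
  rw [w2Map_of_ne_zero _ _ _ _ _ hp, w1Map_of_ne_zero _ _ _ _ _ (div_ne_zero h2 hp), hp₂,
    w2Map_of_ne_zero _ _ _ _ _ (by positivity)]
  simp only [Prod.mk.injEq]
  refine ⟨by ring, by ring, by ring, trivial, ?_, trivial⟩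
  field_simp
  ring

/-- the braid relation w₁w₂w₁ = w₂w₁w₂ for the birational representation of
W(A₂⁽¹⁾), with the common value computed explicitly. -/
theorem stmt8 (a0 a1 a2 t q p : ℝ)
    (hq : q ≠ 0) (hp : p ≠ 0) (h1 : q * p - a1 ≠ 0) (h2 : q * p + a2 ≠ 0) :
    w1Map (w2Map (w1Map (a0, a1, a2, t, q, p))) =
      (a0 + 2 * a1 + 2 * a2, -a2, -a1, t,
        q * (q * p + a2) / (q * p - a1), p * (q * p - a1) / (q * p + a2)) ∧
    w2Map (w1Map (w2Map (a0, a1, a2, t, q, p))) =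
      (a0 + 2 * a1 + 2 * a2, -a2, -a1, t,
        q * (q * p + a2) / (q * p - a1), p * (q * p - a1) / (q * p + a2)) :=
  ⟨w1Map_w2Map_w1Map hq h1 h2, w2Map_w1Map_w2Map hp h1 h2⟩
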